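/- arXiv:1711.10052 — 2 statements merged into one kernel-verified Lean document; each statement's English description precedes it below -/
import Mathlib

section
/- Let D₁, D₂, γ₁, γ₂, h₁, h₂, θ₁ be positive, and let n and N be positive integers. Then the closed form det(S_k) = 2D₁^n D₂^{k−n+1}[(k−n+1)γ₁h₂θ₁ + nγ₂h₁] / [(γ₁θ₁h₁D₂ + γ₂h₂D₁) h₁^{2n−1} h₂^{2(k−n)+1}] satisfies the recurrence det(S_k) = (2D₂/h₂²)det(S_{k−1}) − (D₂²/h₂⁴)det(S_{k−2}) for k = n+2,...,N, and all these values det(S_k) are positive. -/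
/-- The closed form
`s k = 2 D₁ⁿ D₂^{k-n+1} [(k-n+1) γ₁ h₂ θ₁ + n γ₂ h₁] /
      [(γ₁ θ₁ h₁ D₂ + γ₂ h₂ D₁) h₁^{2n-1} h₂^{2(k-n)+1}]`
satisfies the recurrence `s k = (2D₂/h₂²) s (k-1) - (D₂²/h₂⁴) s (k-2)` for
`k = n+2, …, N`, and all these values are positive. -/
theorem stmt_9 (D1 D2 g1 g2 h1 h2 th1 : ℝ) (n N : ℕ)
    (hD1 : 0 < D1) (hD2 : 0 < D2) (hg1 : 0 < g1) (hg2 : 0 < g2)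
    (hh1 : 0 < h1) (hh2 : 0 < h2) (hth1 : 0 < th1)
    (hn : 1 ≤ n) (hN : n + 2 ≤ N)
    (s : ℕ → ℝ)
    (hs : ∀ k : ℕ, n ≤ k →
      s k = 2 * D1 ^ n * D2 ^ (k - n + 1) *
        (((k - n + 1 : ℕ) : ℝ) * g1 * h2 * th1 + (n : ℝ) * g2 * h1) /
        ((g1 * th1 * h1 * D2 + g2 * h2 * D1) * h1 ^ (2 * n - 1) * h2 ^ (2 * (k - n) + 1))) :
    ∀ k : ℕ, n + 2 ≤ k → k ≤ N →
      s k = (2 * D2 / h2 ^ 2) * s (k - 1) - (D2 ^ 2 / h2 ^ 4) * s (k - 2) ∧ 0 < s k := by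
  intro k hk1 _
  obtain ⟨m, rfl⟩ : ∃ m, k = n + 2 + m := ⟨k - (n + 2), by omega⟩
  have e0 := hs (n + 2 + m) (by omega)
  have e1 := hs (n + 2 + m - 1) (by omega)
  have e2 := hs (n + 2 + m - 2) (by omega)
  have h1' : n + 2 + m - 1 = n + (m + 1) := by omega
  have h2' : n + 2 + m - 2 = n + m := by omega
  rw [h1'] at e1
  rw [h2'] at e2
  have d0 : n + 2 + m - n = m + 2 := by omega
  have d1 : n + (m + 1) - n = m + 1 := by omega
  have d2 : n + m - n = m := by omega
  rw [d0] at e0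
  rw [d1] at e1
  rw [d2] at e2
  have hden : (0 : ℝ) < (g1 * th1 * h1 * D2 + g2 * h2 * D1) * h1 ^ (2 * n - 1) * h2 ^ (2 * (m + 2) + 1) := by
    positivity
  constructor
  · rw [e0, h1', h2', e1, e2]
    have hD : (g1 * th1 * h1 * D2 + g2 * h2 * D1) ≠ 0 := by positivity
    field_simp
    push_cast
    ring
  · rw [e0]
    have hnum : (0 : ℝ) < 2 * D1 ^ n * D2 ^ (m + 2 + 1) *
        (((m + 2 + 1 : ℕ) : ℝ) * g1 * h2 * th1 + (n : ℝ) * g2 * h1) := by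
      push_cast
      positivity
    exact div_pos hnum hden
end

section
/- Let D_i, D_{i+1}, γ_i, γ_{i+1}, h_i, h_{i+1} be positive and θ_i = 1. The interface stability bound T₀ = (γ_i h_i D_{i+1} + γ_{i+1} h_{i+1} D_i) h_i h_{i+1} / [(2γ_i h_{i+1} + 2γ_{i+1} h_i) D_i D_{i+1}] satisfies: it cannot be simultaneously strictly smaller than both h_i²/(2D_i) and h_{i+1}²/(2D_{i+1}). -/
/-- With `θᵢ = 1`, the Type GI interface stability bound cannot be simultaneously
strictly smaller than both classical single-layer bounds. -/
theorem stmt_10 (Di Di1 gi gi1 hi hi1 : ℝ)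
    (hDi : 0 < Di) (hDi1 : 0 < Di1) (hgi : 0 < gi) (hgi1 : 0 < gi1)
    (hhi : 0 < hi) (hhi1 : 0 < hi1) :
    ¬ ((gi * hi * Di1 + gi1 * hi1 * Di) * hi * hi1 /
        ((2 * gi * hi1 + 2 * gi1 * hi) * Di * Di1) < hi ^ 2 / (2 * Di) ∧
       (gi * hi * Di1 + gi1 * hi1 * Di) * hi * hi1 /
        ((2 * gi * hi1 + 2 * gi1 * hi) * Di * Di1) < hi1 ^ 2 / (2 * Di1)) := by
  rintro ⟨h1, h2⟩
  have hd : 0 < (2 * gi * hi1 + 2 * gi1 * hi) * Di * Di1 := by positivity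
  rw [div_lt_div_iff₀ hd (by positivity)] at h1 h2
  nlinarith [mul_pos (mul_pos hgi hhi1) hDi1, mul_pos (mul_pos hgi1 hhi) hDi, h1, h2]
end
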